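/- For any four points x, x1, x2, x3 in a metric space, det B3(x, x1, x2, x3) + 4·d(x,x1)^2·d(x,x2)^2·d(x,x3)^2 ≥ 0, so the Oja-depth kernel h(x, x1, x2, x3) := (det B3(x, x1, x2, x3) + 4·d(x,x1)^2·d(x,x2)^2·d(x,x3)^2)^{1/2} is well-defined as a real number. -/
import Mathlib
set_option maxHeartbeats 1000000


/-- The `3 × 3` matrix `B3(x, x1, x2, x3)` with `(k,ℓ)`-entry
`(1/2)(d(x,x_k)² + d(x,x_ℓ)² - d(x_k,x_ℓ)²)`. -/
noncomputable def B3 {X : Type*} [MetricSpace X] (x x1 x2 x3 : X) :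
    Matrix (Fin 3) (Fin 3) ℝ :=
  Matrix.of fun k ℓ =>
    (1 / 2) * (dist x (![x1, x2, x3] k) ^ 2 + dist x (![x1, x2, x3] ℓ) ^ 2
      - dist (![x1, x2, x3] k) (![x1, x2, x3] ℓ) ^ 2)

lemma oja_aux (a b c α β γ : ℝ) (hα2 : α ^ 2 ≤ a ^ 2 * b ^ 2)
    (hβ2 : β ^ 2 ≤ a ^ 2 * c ^ 2) (hγ2 : γ ^ 2 ≤ b ^ 2 * c ^ 2) :
    0 ≤ 5 * (a ^ 2 * b ^ 2 * c ^ 2) + 2 * (α * β * γ)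
      - a ^ 2 * γ ^ 2 - b ^ 2 * β ^ 2 - c ^ 2 * α ^ 2 := by
  have k1 : |α| ≤ |a * b| := by
    rw [← Real.sqrt_sq_eq_abs, ← Real.sqrt_sq_eq_abs]
    exact Real.sqrt_le_sqrt (by nlinarith)
  have k2 : |β| ≤ |a * c| := by
    rw [← Real.sqrt_sq_eq_abs, ← Real.sqrt_sq_eq_abs]
    exact Real.sqrt_le_sqrt (by nlinarith)
  have k3 : |γ| ≤ |b * c| := by
    rw [← Real.sqrt_sq_eq_abs, ← Real.sqrt_sq_eq_abs]
    exact Real.sqrt_le_sqrt (by nlinarith)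
  have h12 : |α| * |β| ≤ |a * b| * |a * c| :=
    mul_le_mul k1 k2 (abs_nonneg β) (abs_nonneg _)
  have h123 : |α| * |β| * |γ| ≤ |a * b| * |a * c| * |b * c| :=
    mul_le_mul h12 k3 (abs_nonneg γ) (by positivity)
  have habs : -(a ^ 2 * b ^ 2 * c ^ 2) ≤ α * β * γ := by
    have e : |a * b| * |a * c| * |b * c| = a ^ 2 * b ^ 2 * c ^ 2 := by
      rw [abs_mul, abs_mul, abs_mul]
      rw [show |a| * |b| * (|a| * |c|) * (|b| * |c|)
          = |a| ^ 2 * |b| ^ 2 * |c| ^ 2 by ring, sq_abs, sq_abs, sq_abs]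
    have := neg_abs_le (α * β * γ)
    have habsm : |α * β * γ| ≤ a ^ 2 * b ^ 2 * c ^ 2 := by
      rw [abs_mul, abs_mul]; rw [e] at h123; exact h123
    linarith
  have s1 : a ^ 2 * γ ^ 2 ≤ a ^ 2 * (b ^ 2 * c ^ 2) :=
    mul_le_mul_of_nonneg_left hγ2 (sq_nonneg a)
  have s2 : b ^ 2 * β ^ 2 ≤ b ^ 2 * (a ^ 2 * c ^ 2) :=
    mul_le_mul_of_nonneg_left hβ2 (sq_nonneg b)
  have s3 : c ^ 2 * α ^ 2 ≤ c ^ 2 * (a ^ 2 * b ^ 2) :=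
    mul_le_mul_of_nonneg_left hα2 (sq_nonneg c)
  nlinarith

theorem oja_kernel_well_defined {X : Type*} [MetricSpace X] (x x1 x2 x3 : X) :
    0 ≤ (B3 x x1 x2 x3).det + 4 * dist x x1 ^ 2 * dist x x2 ^ 2 * dist x x3 ^ 2 ∧
    (Real.sqrt ((B3 x x1 x2 x3).det +
        4 * dist x x1 ^ 2 * dist x x2 ^ 2 * dist x x3 ^ 2)) ^ 2 =
      (B3 x x1 x2 x3).det + 4 * dist x x1 ^ 2 * dist x x2 ^ 2 * dist x x3 ^ 2 := by
  have ha : (0:ℝ) ≤ dist x x1 := dist_nonneg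
  have hb : (0:ℝ) ≤ dist x x2 := dist_nonneg
  have hc : (0:ℝ) ≤ dist x x3 := dist_nonneg
  have hα2 : ((1:ℝ)/2 * (dist x x1 ^ 2 + dist x x2 ^ 2 - dist x1 x2 ^ 2)) ^ 2
      ≤ dist x x1 ^ 2 * dist x x2 ^ 2 := by
    have t1 := dist_triangle x x2 x1
    have t2 := dist_triangle x x1 x2
    have t3 := dist_triangle x1 x x2
    rw [dist_comm x1 x] at t3
    rw [dist_comm x2 x1] at t1
    have f1 : 0 ≤ dist x1 x2 + (dist x x1 - dist x x2) := by linarith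
    have f2 : 0 ≤ dist x1 x2 - (dist x x1 - dist x x2) := by linarith
    have f3 : 0 ≤ dist x x1 + dist x x2 - dist x1 x2 := by linarith
    have f4 : 0 ≤ dist x x1 + dist x x2 + dist x1 x2 := by
      have := dist_nonneg (x := x) (y := x1); have := dist_nonneg (x := x) (y := x2)
      have := dist_nonneg (x := x1) (y := x2); linarith
    nlinarith [mul_nonneg (mul_nonneg (mul_nonneg f1 f2) f3) f4]

  have hβ2 : ((1:ℝ)/2 * (dist x x1 ^ 2 + dist x x3 ^ 2 - dist x1 x3 ^ 2)) ^ 2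
      ≤ dist x x1 ^ 2 * dist x x3 ^ 2 := by
    have t1 := dist_triangle x x3 x1
    have t2 := dist_triangle x x1 x3
    have t3 := dist_triangle x1 x x3
    rw [dist_comm x1 x] at t3
    rw [dist_comm x3 x1] at t1
    have f1 : 0 ≤ dist x1 x3 + (dist x x1 - dist x x3) := by linarith
    have f2 : 0 ≤ dist x1 x3 - (dist x x1 - dist x x3) := by linarith
    have f3 : 0 ≤ dist x x1 + dist x x3 - dist x1 x3 := by linarith
    have f4 : 0 ≤ dist x x1 + dist x x3 + dist x1 x3 := by
      have := dist_nonneg (x := x) (y := x1); have := dist_nonneg (x := x) (y := x3)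
      have := dist_nonneg (x := x1) (y := x3); linarith
    nlinarith [mul_nonneg (mul_nonneg (mul_nonneg f1 f2) f3) f4]

  have hγ2 : ((1:ℝ)/2 * (dist x x2 ^ 2 + dist x x3 ^ 2 - dist x2 x3 ^ 2)) ^ 2
      ≤ dist x x2 ^ 2 * dist x x3 ^ 2 := by
    have t1 := dist_triangle x x3 x2
    have t2 := dist_triangle x x2 x3
    have t3 := dist_triangle x2 x x3
    rw [dist_comm x2 x] at t3
    rw [dist_comm x3 x2] at t1
    have f1 : 0 ≤ dist x2 x3 + (dist x x2 - dist x x3) := by linarith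
    have f2 : 0 ≤ dist x2 x3 - (dist x x2 - dist x x3) := by linarith
    have f3 : 0 ≤ dist x x2 + dist x x3 - dist x2 x3 := by linarith
    have f4 : 0 ≤ dist x x2 + dist x x3 + dist x2 x3 := by
      have := dist_nonneg (x := x) (y := x2); have := dist_nonneg (x := x) (y := x3)
      have := dist_nonneg (x := x2) (y := x3); linarith
    nlinarith [mul_nonneg (mul_nonneg (mul_nonneg f1 f2) f3) f4]

  have hdet : (B3 x x1 x2 x3).det =
      dist x x1 ^ 2 * dist x x2 ^ 2 * dist x x3 ^ 2
        + 2 * (((1:ℝ)/2 * (dist x x1 ^ 2 + dist x x2 ^ 2 - dist x1 x2 ^ 2))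
            * ((1:ℝ)/2 * (dist x x1 ^ 2 + dist x x3 ^ 2 - dist x1 x3 ^ 2))
            * ((1:ℝ)/2 * (dist x x2 ^ 2 + dist x x3 ^ 2 - dist x2 x3 ^ 2)))
        - dist x x1 ^ 2 * ((1:ℝ)/2 * (dist x x2 ^ 2 + dist x x3 ^ 2 - dist x2 x3 ^ 2)) ^ 2
        - dist x x2 ^ 2 * ((1:ℝ)/2 * (dist x x1 ^ 2 + dist x x3 ^ 2 - dist x1 x3 ^ 2)) ^ 2
        - dist x x3 ^ 2 * ((1:ℝ)/2 * (dist x x1 ^ 2 + dist x x2 ^ 2 - dist x1 x2 ^ 2)) ^ 2 := by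
    rw [Matrix.det_fin_three]
    simp only [B3, Matrix.of_apply, Matrix.cons_val', Matrix.cons_val_zero,
      Matrix.cons_val_one, Matrix.head_cons, Matrix.empty_val',
      Matrix.cons_val_fin_one, Matrix.head_fin_const, Matrix.cons_val_two,
      Matrix.tail_cons]
    rw [dist_comm x2 x1, dist_comm x3 x1, dist_comm x3 x2]
    simp only [dist_self]
    ring
  have key : 0 ≤ (B3 x x1 x2 x3).det
      + 4 * dist x x1 ^ 2 * dist x x2 ^ 2 * dist x x3 ^ 2 := by
    have := oja_aux (dist x x1) (dist x x2) (dist x x3) _ _ _ hα2 hβ2 hγ2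
    rw [hdet]; linarith
  exact ⟨key, Real.sq_sqrt key⟩
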